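/- With the setup of Theorem 1, the absolute value of the discriminant of F(x) = F₀(x) + q·m·p^d satisfies |Δ(F)| = q^q · m^{q−1} · |∏_{i=1}^{q₀−1}(q·p^d + C_i) · ∏_{j=1}^{q₁−1}(q·p^d + D_j)|, where C_i = F₀(−i·q₂·m·(q−1)!)/m and D_j = F₀(−j·m·(q−1)!)/m. -/

import Mathlib

open Polynomial

/-- `a(x) = ∏_{i=1}^{q₀-1} (x + i·q₂·m·(q-1)!)`. -/
noncomputable def aPoly (q₀ q₂ q : ℕ) (m : ℤ) : Polynomial ℤ :=
  ∏ i ∈ Finset.Icc 1 (q₀ - 1), (X + C ((i : ℤ) * q₂ * m * (Nat.factorial (q - 1) : ℤ)))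

/-- `b(x) = ∏_{j=1}^{q₁-1} (x + j·m·(q-1)!)`. -/
noncomputable def bPoly (q₁ q : ℕ) (m : ℤ) : Polynomial ℤ :=
  ∏ j ∈ Finset.Icc 1 (q₁ - 1), (X + C ((j : ℤ) * m * (Nat.factorial (q - 1) : ℤ)))

/-- `G(x) = q · a(x) · b(x)`. -/
noncomputable def GPoly (q₀ q₁ q₂ q : ℕ) (m : ℤ) : Polynomial ℤ :=
  C (q : ℤ) * aPoly q₀ q₂ q m * bPoly q₁ q m

/-- `F₀(x) = ∫₀ˣ G(t) dt`, as a polynomial with rational coefficients. -/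
noncomputable def F0 (q₀ q₁ q₂ q : ℕ) (m : ℤ) : Polynomial ℚ :=
  ∑ k ∈ Finset.range ((GPoly q₀ q₁ q₂ q m).natDegree + 1),
    C (((GPoly q₀ q₁ q₂ q m).coeff k : ℚ) / (k + 1)) * X ^ (k + 1)

/-- The Sylvester matrix of two integer polynomials. -/
noncomputable def sylvester (f g : Polynomial ℤ) :
    Matrix (Fin (g.natDegree + f.natDegree)) (Fin (g.natDegree + f.natDegree)) ℤ :=
  fun i j =>
    if (i : ℕ) < g.natDegree then
      if (i : ℕ) ≤ (j : ℕ) ∧ (j : ℕ) ≤ (i : ℕ) + f.natDegree then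
        f.coeff (f.natDegree - ((j : ℕ) - (i : ℕ)))
      else 0
    else
      if (i : ℕ) - g.natDegree ≤ (j : ℕ) ∧ (j : ℕ) ≤ (i : ℕ) then
        g.coeff (g.natDegree - ((j : ℕ) - ((i : ℕ) - g.natDegree)))
      else 0

/-- The resultant of two integer polynomials. -/
noncomputable def resultant (f g : Polynomial ℤ) : ℤ := (_root_.sylvester f g).det

/-- The discriminant of a monic integer polynomial. -/
noncomputable def discMonic (f : Polynomial ℤ) : ℤ :=
  (-1) ^ (f.natDegree * (f.natDegree - 1) / 2) * _root_.resultant f f.derivative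

/-!
Up to sign, the discriminant of `F` is `Res(F, F')`, and `F' = G = q·a·b` is `q` times a product
of linear factors `X + c`. Since the resultant is multiplicative in its second argument,
`Res(F, G) = ± q^{deg F} ∏ F(-c)` over the `q - 1` roots `-c` of `G`, and at each of them
`F(-c) = F₀(-c) + q·m·p^d = m·(q·p^d + C)`.
-/

open Finset Matrix

theorem Polynomial.resultant_finsetProd_X_add_C {R ι : Type*} [CommRing R] [Nontrivial R]
    (f : R[X]) {m : ℕ} (hf : f.natDegree ≤ m) (s : Finset ι) (r : ι → R) :
    f.resultant (∏ i ∈ s, (X + C (r i))) m = ∏ i ∈ s, ((-1) ^ m * f.eval (-r i)) := by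
  rw [resultant_prod_right _ _ _ _ hf (by simp)]
  exact prod_congr rfl fun i _ => by
    rw [natDegree_X_add_C, resultant_X_add_C_right _ _ _ hf]

theorem Polynomial.natDegree_finsetProd_X_add_C_eq_card {R ι : Type*} [CommRing R] [Nontrivial R]
    (s : Finset ι) (r : ι → R) : (∏ i ∈ s, (X + C (r i))).natDegree = #s := by
  rw [natDegree_prod_of_monic _ _ fun i _ => monic_X_add_C (r i)]
  simp only [natDegree_X_add_C, sum_const, smul_eq_mul, mul_one]

theorem sylvester_eq_transpose_submatrix (f g : ℤ[X]) :
    f.sylvester g f.natDegree g.natDegree =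
      ((_root_.sylvester f g).submatrix
        ((finCongr (add_comm _ _)).trans Fin.revPerm)
        ((finCongr (add_comm _ _)).trans Fin.revPerm))ᵀ := by
  ext i j
  induction j using Fin.addCases <;>
    simp only [Polynomial.sylvester, _root_.sylvester, Set.mem_Icc, of_apply, Fin.addCases_left,
      Fin.addCases_right, Equiv.coe_trans, transpose_apply, submatrix_apply, Function.comp_apply,
      finCongr_apply, Fin.cast_natAdd, Fin.revPerm_apply, Fin.val_rev, Fin.val_addNat, Fin.val_cast,
      Fin.val_castAdd, tsub_le_iff_right] <;>
    split_ifs <;> first | omega | (congr 1; omega)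

theorem resultant_eq_polynomial_resultant (f g : ℤ[X]) :
    _root_.resultant f g = f.resultant g := by
  rw [Polynomial.resultant, sylvester_eq_transpose_submatrix, det_transpose,
    det_submatrix_equiv_self, _root_.resultant]

theorem abs_discMonic (f : ℤ[X]) : |discMonic f| = |f.resultant f.derivative| := by
  rw [discMonic, abs_mul, abs_pow, abs_neg, abs_one, one_pow, one_mul,
    resultant_eq_polynomial_resultant]

theorem aPoly_monic (q₀ q₂ q : ℕ) (m : ℤ) : (aPoly q₀ q₂ q m).Monic :=
  monic_prod_of_monic _ _ fun _ _ => monic_X_add_C _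

theorem bPoly_monic (q₁ q : ℕ) (m : ℤ) : (bPoly q₁ q m).Monic :=
  monic_prod_of_monic _ _ fun _ _ => monic_X_add_C _

theorem GPoly_natDegree_eq_add (q₀ q₁ q₂ q : ℕ) (m : ℤ) (hq : q ≠ 0) :
    (GPoly q₀ q₁ q₂ q m).natDegree =
      (aPoly q₀ q₂ q m).natDegree + (bPoly q₁ q m).natDegree := by
  rw [GPoly, mul_assoc, natDegree_C_mul (by exact_mod_cast hq),
    natDegree_mul (aPoly_monic q₀ q₂ q m).ne_zero (bPoly_monic q₁ q m).ne_zero]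

theorem GPoly_natDegree (q₀ q₁ q₂ q : ℕ) (m : ℤ) (hq : q ≠ 0) :
    (GPoly q₀ q₁ q₂ q m).natDegree = (q₀ - 1) + (q₁ - 1) := by
  rw [GPoly_natDegree_eq_add q₀ q₁ q₂ q m hq, aPoly, bPoly,
    natDegree_finsetProd_X_add_C_eq_card, natDegree_finsetProd_X_add_C_eq_card, Nat.card_Icc,
    Nat.card_Icc, Nat.add_sub_cancel, Nat.add_sub_cancel]

theorem resultant_GPoly (q₀ q₁ q₂ q : ℕ) (m : ℤ) (hq : q ≠ 0) (f : ℤ[X]) :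
    f.resultant (GPoly q₀ q₁ q₂ q m) =
      q ^ f.natDegree *
        (∏ i ∈ Icc 1 (q₀ - 1),
          ((-1) ^ f.natDegree * f.eval (-((i : ℤ) * q₂ * m * (q - 1).factorial)))) *
        ∏ j ∈ Icc 1 (q₁ - 1),
          ((-1) ^ f.natDegree * f.eval (-((j : ℤ) * m * (q - 1).factorial))) := by
  rw [GPoly_natDegree_eq_add q₀ q₁ q₂ q m hq, GPoly, mul_assoc, resultant_C_mul_right,
    resultant_mul_right _ _ _ _ le_rfl, aPoly, bPoly, resultant_finsetProd_X_add_C _ le_rfl,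
    resultant_finsetProd_X_add_C _ le_rfl, mul_assoc]

theorem F0_derivative (q₀ q₁ q₂ q : ℕ) (m : ℤ) :
    (F0 q₀ q₁ q₂ q m).derivative = (GPoly q₀ q₁ q₂ q m).map (Int.castRingHom ℚ) := by
  rw [F0, derivative_sum, as_sum_range_C_mul_X_pow (map _ _),
    natDegree_map_eq_of_injective (RingHom.injective_int _)]
  refine sum_congr rfl fun k _ => ?_
  rw [derivative_C_mul_X_pow, coeff_map, eq_intCast, Nat.cast_succ, add_tsub_cancel_right]
  field_simp

theorem abs_disc_F_general (q₀ q₁ q₂ q : ℕ) (m : ℤ)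
    (hq₀ : Nat.Prime q₀) (hq₁ : Nat.Prime q₁) (hqeq : q = q₀ + q₁ - 1)
    (hm : 1 ≤ m) (p d : ℕ)
    (Fz : Polynomial ℤ)
    (hFz : Fz.map (Int.castRingHom ℚ) =
      F0 q₀ q₁ q₂ q m + C (((q : ℤ) * m * (p : ℤ) ^ d : ℤ) : ℚ))
    (Cf Df : ℕ → ℤ)
    (hC : ∀ i ∈ Finset.Icc 1 (q₀ - 1),
      (Cf i : ℚ) * (m : ℚ) =
        (F0 q₀ q₁ q₂ q m).eval ((-((i : ℤ) * q₂ * m * (Nat.factorial (q - 1) : ℤ)) : ℤ) : ℚ))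
    (hD : ∀ j ∈ Finset.Icc 1 (q₁ - 1),
      (Df j : ℚ) * (m : ℚ) =
        (F0 q₀ q₁ q₂ q m).eval ((-((j : ℤ) * m * (Nat.factorial (q - 1) : ℤ)) : ℤ) : ℚ)) :
    |discMonic Fz| =
      (q : ℤ) ^ q * m ^ (q - 1) *
        |(∏ i ∈ Finset.Icc 1 (q₀ - 1), ((q : ℤ) * (p : ℤ) ^ d + Cf i)) *
          ∏ j ∈ Finset.Icc 1 (q₁ - 1), ((q : ℤ) * (p : ℤ) ^ d + Df j)| := by
  have hq₀1 := hq₀.one_le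
  have hq₁2 := hq₁.two_le
  have hq0 : q ≠ 0 := by omega
  have hder : Fz.derivative = GPoly q₀ q₁ q₂ q m := by
    apply map_injective _ (RingHom.injective_int (Int.castRingHom ℚ))
    rw [← derivative_map, hFz, derivative_add, derivative_C, add_zero, F0_derivative]
  have hdeg : Fz.natDegree = q := by
    have := natDegree_derivative Fz
    rw [hder, GPoly_natDegree q₀ q₁ q₂ q m hq0] at this
    omega
  have heval (x c : ℤ) (hc : (c : ℚ) * m = (F0 q₀ q₁ q₂ q m).eval (x : ℚ)) :
      Fz.eval x = m * ((q : ℤ) * (p : ℤ) ^ d + c) := by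
    have h := eval_intCast_map (Int.castRingHom ℚ) Fz x
    rw [hFz, eval_add, eval_C, ← hc, eq_intCast, Int.cast_id] at h
    apply Int.cast_injective (α := ℚ)
    rw [← h]
    push_cast
    ring
  rw [abs_discMonic, hder, resultant_GPoly q₀ q₁ q₂ q m hq0, hdeg,
    prod_congr rfl fun i hi => congrArg _ (heval _ _ (hC i hi)),
    prod_congr rfl fun j hj => congrArg _ (heval _ _ (hD j hj))]
  simp only [abs_mul, abs_prod, abs_pow, abs_neg, abs_one, one_pow, one_mul, Nat.abs_cast,
    abs_of_nonneg (by omega : 0 ≤ m), prod_mul_distrib, prod_const, Nat.card_Icc]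
  rw [show q - 1 = (q₀ - 1 + 1 - 1) + (q₁ - 1 + 1 - 1) by omega, pow_add]
  ring

/-- The absolute value of the discriminant of `F = F₀ + q·m·p^d` equals
`q^q · m^{q-1} · |∏ᵢ (q·p^d + Cᵢ) · ∏ⱼ (q·p^d + Dⱼ)|`. -/
theorem abs_disc_F (q₀ q₁ q₂ q : ℕ) (m : ℤ)
    (hq₀ : Nat.Prime q₀) (hq₁ : Nat.Prime q₁) (hlt : q₀ < q₁)
    (hq : Nat.Prime q) (hq3 : 3 ≤ q) (hqeq : q = q₀ + q₁ - 1)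
    (hm : 1 ≤ m) (hmsf : Squarefree m) (hqm : ¬ (q : ℤ) ∣ m)
    (hq₂ : Nat.Prime q₂) (hcong : (q₂ : ℤ) ≡ -1 [ZMOD (q : ℤ)])
    (p d : ℕ) (hp : Nat.Prime p) (hpq : p ≠ q) (hd : 1 ≤ d)
    (Fz : Polynomial ℤ)
    (hFz : Fz.map (Int.castRingHom ℚ) =
      F0 q₀ q₁ q₂ q m + C (((q : ℤ) * m * (p : ℤ) ^ d : ℤ) : ℚ))
    (Cf Df : ℕ → ℤ)
    (hC : ∀ i ∈ Finset.Icc 1 (q₀ - 1),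
      (Cf i : ℚ) * (m : ℚ) =
        (F0 q₀ q₁ q₂ q m).eval ((-((i : ℤ) * q₂ * m * (Nat.factorial (q - 1) : ℤ)) : ℤ) : ℚ))
    (hD : ∀ j ∈ Finset.Icc 1 (q₁ - 1),
      (Df j : ℚ) * (m : ℚ) =
        (F0 q₀ q₁ q₂ q m).eval ((-((j : ℤ) * m * (Nat.factorial (q - 1) : ℤ)) : ℤ) : ℚ)) :
    |discMonic Fz| =
      (q : ℤ) ^ q * m ^ (q - 1) *
        |(∏ i ∈ Finset.Icc 1 (q₀ - 1), ((q : ℤ) * (p : ℤ) ^ d + Cf i)) *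
          ∏ j ∈ Finset.Icc 1 (q₁ - 1), ((q : ℤ) * (p : ℤ) ^ d + Df j)| :=
  abs_disc_F_general q₀ q₁ q₂ q m hq₀ hq₁ hqeq hm p d Fz hFz Cf Df hC hD
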